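/- For a one-parameter transformation group T_θ : ℝ² → ℝ² that is differentiable in θ and satisfies T_{θ+θ'} = T_θ ∘ T_{θ'}, a differentiable map ρ : ℝ² → ℝ² satisfies ρ(T_θ x) = ρ(x) + θe₁ for all θ if and only if ρ(T_0 x) = ρ(x) and (v₁(x) ∂ρ/∂x₁ + v₂(x) ∂ρ/∂x₂)(x) = e₁ for all x, where v(x) = (∂/∂θ)T_θ x |_{θ=0} is the infinitesimal generator. -/

import Mathlib

/-!
The group law gives `T θ x = T (θ - θ₀) (T θ₀ x)`, so the orbit `θ ↦ T θ x` has velocity `v (T θ₀ x)`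
at every `θ₀`, where `v` is the infinitesimal generator. Along an orbit, `θ ↦ ρ (T θ x)` therefore
has derivative `Dρ (T θ x) (v (T θ x))`. If `ρ (T θ x) = ρ x + θ e₁`, evaluating this at `θ = 0`
gives `Dρ x (v x) = e₁`; conversely, if `Dρ (v) = e₁` everywhere, then `θ ↦ ρ (T θ x) - θ e₁` has
zero derivative, hence equals its value `ρ (T 0 x) = ρ x` at `θ = 0`.
-/

namespace OneParameterGroup

variable {E F : Type*} [NormedAddCommGroup E] [NormedSpace ℝ E]
  [NormedAddCommGroup F] [NormedSpace ℝ F] {T : ℝ → E → E}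

noncomputable def generator (T : ℝ → E → E) (x : E) : E :=
  deriv (fun θ => T θ x) 0

theorem hasDerivAt_orbit (hTadd : ∀ θ θ' : ℝ, T (θ + θ') = T θ ∘ T θ')
    (hTdiff : ∀ x : E, DifferentiableAt ℝ (fun θ => T θ x) 0) (x : E) (θ₀ : ℝ) :
    HasDerivAt (fun θ => T θ x) (generator T (T θ₀ x)) θ₀ := by
  have hgen : HasDerivAt (fun s => T s (T θ₀ x)) (generator T (T θ₀ x)) (θ₀ - θ₀) := by
    rw [sub_self]
    exact (hTdiff (T θ₀ x)).hasDerivAt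
  refine (hgen.comp_sub_const θ₀ θ₀).congr_of_eventuallyEq (Filter.Eventually.of_forall fun θ => ?_)
  change T θ x = T (θ - θ₀) (T θ₀ x)
  rw [← Function.comp_apply (f := T (θ - θ₀)), ← hTadd, sub_add_cancel]

theorem hasDerivAt_comp_orbit {ρ : E → F} (hρ : Differentiable ℝ ρ)
    (hTadd : ∀ θ θ' : ℝ, T (θ + θ') = T θ ∘ T θ')
    (hTdiff : ∀ x : E, DifferentiableAt ℝ (fun θ => T θ x) 0) (x : E) (θ₀ : ℝ) :
    HasDerivAt (fun θ => ρ (T θ x)) (fderiv ℝ ρ (T θ₀ x) (generator T (T θ₀ x))) θ₀ :=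
  (hρ (T θ₀ x)).hasFDerivAt.comp_hasDerivAt θ₀ (hasDerivAt_orbit hTadd hTdiff x θ₀)

theorem fderiv_generator_eq_of_canonical {ρ : E → F} {e : F} {x : E} (hT0 : T 0 = id)
    (hρ : DifferentiableAt ℝ ρ x) (hTdiff : DifferentiableAt ℝ (fun θ => T θ x) 0)
    (hcan : ∀ θ : ℝ, ρ (T θ x) = ρ x + θ • e) :
    fderiv ℝ ρ x (generator T x) = e := by
  have hchain : HasDerivAt (fun θ => ρ (T θ x)) (fderiv ℝ ρ x (generator T x)) 0 := by
    have hρ' : HasFDerivAt ρ (fderiv ℝ ρ x) (T 0 x) := by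
      rw [hT0]
      exact hρ.hasFDerivAt
    exact hρ'.comp_hasDerivAt 0 hTdiff.hasDerivAt
  have hline : HasDerivAt (fun θ : ℝ => ρ x + θ • e) e 0 := by
    simpa using ((hasDerivAt_id (0 : ℝ)).smul_const e).const_add (ρ x)
  rw [funext hcan] at hchain
  exact hchain.unique hline

theorem canonical_of_fderiv_generator_eq {ρ : E → F} {e : F} (hρ : Differentiable ℝ ρ)
    (hTadd : ∀ θ θ' : ℝ, T (θ + θ') = T θ ∘ T θ')
    (hTdiff : ∀ x : E, DifferentiableAt ℝ (fun θ => T θ x) 0)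
    (hgen : ∀ x : E, fderiv ℝ ρ x (generator T x) = e) (x : E) (hx : ρ (T 0 x) = ρ x)
    (θ : ℝ) : ρ (T θ x) = ρ x + θ • e := by
  have hzero : ∀ θ₀, HasDerivAt (fun θ : ℝ => ρ (T θ x) - θ • e) 0 θ₀ := fun θ₀ => by
    have hline := (hasDerivAt_id θ₀).smul_const e
    rw [one_smul] at hline
    have hdiff := (hasDerivAt_comp_orbit hρ hTadd hTdiff x θ₀).sub hline
    rwa [hgen, sub_self] at hdiff
  have hconst := is_const_of_deriv_eq_zero (fun θ₀ => (hzero θ₀).differentiableAt)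
    (fun θ₀ => (hzero θ₀).deriv) θ 0
  simp only [zero_smul, sub_zero, hx] at hconst
  rw [← hconst, sub_add_cancel]

end OneParameterGroup

/-- Canonical coordinate condition is equivalent to the infinitesimal generator equation. -/
theorem stmt_12 (T : ℝ → ℝ × ℝ → ℝ × ℝ)
    (hT0 : T 0 = id)
    (hTadd : ∀ θ θ' : ℝ, T (θ + θ') = T θ ∘ T θ')
    (hTdiff : ∀ x : ℝ × ℝ, Differentiable ℝ (fun θ => T θ x))
    (ρ : ℝ × ℝ → ℝ × ℝ) (hρ : ContDiff ℝ 1 ρ) :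
    (∀ (θ : ℝ) (x : ℝ × ℝ), ρ (T θ x) = ρ x + θ • ((1 : ℝ), (0 : ℝ))) ↔
      (∀ x : ℝ × ℝ, ρ (T 0 x) = ρ x ∧
        fderiv ℝ ρ x (deriv (fun θ => T θ x) 0) = ((1 : ℝ), (0 : ℝ))) := by
  have hρd : Differentiable ℝ ρ := hρ.differentiable one_ne_zero
  have hTdiff0 : ∀ x, DifferentiableAt ℝ (fun θ => T θ x) 0 := fun x => hTdiff x 0
  constructor
  · intro hcan x
    exact ⟨by simpa using hcan 0 x,
      OneParameterGroup.fderiv_generator_eq_of_canonical hT0 (hρd x) (hTdiff0 x) (hcan · x)⟩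
  · intro hinf θ x
    exact OneParameterGroup.canonical_of_fderiv_generator_eq hρd hTadd hTdiff0
      (fun x => (hinf x).2) x (hinf x).1 θ
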